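/- arXiv:0802.4345 — 2 statements merged into one kernel-verified Lean document; each statement's English description precedes it below -/
import Mathlib

section
/- Let n ≥ 2 and equip ℝⁿ with the Minkowski form g; call an affine line ℓ = {r + λ·v : λ ∈ ℝ} timelike (slow) iff g(v, v) > 0. If F : ℝⁿ → ℝⁿ is a bijection such that the image F(ℓ) of every timelike line ℓ is again a timelike line, then F is an affine map. -/
/-!
The image of a timelike line through `a` and `a + u` is the line through `F a` and `F (a + u)`.
In an affine plane `p + ℝ v + ℝ w` with `v` timelike, every point lies on a timelike chord joining
two fixed timelike lines through `p`, so `F` maps the plane into a plane. Two disjoint parallel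
timelike lines of the plane thus go to disjoint lines of a plane, i.e. to parallel lines, and this
gives the parallelogram law `F (a + u + w) = F (a + u) + F (a + w) - F a` for independent timelike
`u, w`. As every vector is a sum of two timelike vectors avoiding a given line, `G = F - F 0` is
additive. Along a timelike `v` we have `G (t • v) = φ_v t • G v`; expanding `G (t • (u ± w))`
shows that `φ_v` does not depend on `v`, which makes it multiplicative, so it is a ring
endomorphism of `ℝ`, hence the identity.
-/

/-- The Minkowski bilinear form of signature `(1, n-1)` on `ℝⁿ`:
`g v w = v⁰w⁰ - ∑_{i=1}^{n-1} vⁱwⁱ`. -/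
noncomputable def minkG {n : ℕ} (v w : Fin n → ℝ) : ℝ :=
  ∑ i : Fin n, if (i : ℕ) = 0 then v i * w i else -(v i * w i)

open Filter Topology Set Submodule Module Function

section Line

variable {E : Type*} [AddCommGroup E] [Module ℝ E]

def line (r v : E) : Set E := {x | ∃ lam : ℝ, x = r + lam • v}

lemma line_add_smul_smul (r v : E) (s : ℝ) {c : ℝ} (hc : c ≠ 0) :
    line (r + s • v) (c • v) = line r v := by
  ext x
  constructor
  · rintro ⟨lam, rfl⟩
    exact ⟨s + lam * c, by module⟩
  · rintro ⟨lam, rfl⟩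
    exact ⟨(lam - s) / c, by rw [smul_smul, div_mul_cancel₀ _ hc]; module⟩

lemma line_inter_line_add_eq_empty {u w : E} (huw : LinearIndependent ℝ ![u, w]) (a : E) :
    line a u ∩ line (a + w) u = ∅ := by
  refine eq_empty_of_forall_notMem fun x ⟨⟨s, hs⟩, ⟨t, ht⟩⟩ => ?_
  have := LinearIndependent.pair_iff.1 huw (s - t) (-1)
    (by linear_combination (norm := module) ht - hs)
  norm_num at this

end Line

lemma mem_span_pair_of_finrank_le_two {K V : Type*} [Field K] [AddCommGroup V] [Module K V]
    {W : Submodule K V} [FiniteDimensional K W] (hW : finrank K W ≤ 2) {x y z : V}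
    (hx : x ∈ W) (hy : y ∈ W) (hz : z ∈ W) (hxy : LinearIndependent K ![x, y]) :
    z ∈ span K {x, y} := by
  have hle : span K {x, y} ≤ W := span_le.2 (insert_subset hx (singleton_subset_iff.2 hy))
  have hrank : finrank K (span K {x, y}) = 2 := by
    rw [← Matrix.range_cons_cons_empty, finrank_span_eq_card hxy, Fintype.card_fin]
  rwa [eq_of_le_of_finrank_le hle (hrank ▸ hW)]

lemma linearIndependent_pair_of_notMem_span {K V : Type*} [Field K] [AddCommGroup V]
    [Module K V] {x y : V} (hx : x ≠ 0) (hy : y ∉ K ∙ x) : LinearIndependent K ![x, y] :=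
  (LinearIndependent.pair_iff' hx).2 fun c hc => hy (mem_span_singleton.2 ⟨c, hc⟩)

variable {n : ℕ}

def IsTimelike (v : Fin n → ℝ) : Prop := 0 < minkG v v

lemma minkG_smul_smul (c : ℝ) (v : Fin n → ℝ) :
    minkG (c • v) (c • v) = c ^ 2 * minkG v v := by
  simp only [minkG, Finset.mul_sum]
  congr 1; ext i; split_ifs <;> simp <;> ring

lemma minkG_add_add_add_minkG_sub_sub (u w : Fin n → ℝ) :
    minkG (u + w) (u + w) + minkG (u - w) (u - w) = 2 * (minkG u u + minkG w w) := by
  simp only [minkG, ← Finset.sum_add_distrib, Finset.mul_sum]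
  congr 1; ext i; split_ifs <;> simp <;> ring

lemma continuous_minkG_self : Continuous fun v : Fin n → ℝ => minkG v v :=
  continuous_finsetSum _ fun i _ => by split_ifs <;> fun_prop

lemma isOpen_setOf_isTimelike : IsOpen {v : Fin n → ℝ | IsTimelike v} :=
  isOpen_lt continuous_const continuous_minkG_self

namespace IsTimelike

variable {u v w : Fin n → ℝ}

lemma smul (hv : IsTimelike v) {c : ℝ} (hc : c ≠ 0) : IsTimelike (c • v) := by
  unfold IsTimelike at *
  rw [minkG_smul_smul]
  positivity

lemma neg (hv : IsTimelike v) : IsTimelike (-v) := by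
  simpa using hv.smul (neg_ne_zero.2 one_ne_zero)

lemma ne_zero (hv : IsTimelike v) : v ≠ 0 := by
  rintro rfl
  simp [IsTimelike, minkG] at hv

lemma add_or_sub (hu : IsTimelike u) (hw : IsTimelike w) :
    IsTimelike (u + w) ∨ IsTimelike (u - w) := by
  by_contra! h
  have := minkG_add_add_add_minkG_sub_sub u w
  unfold IsTimelike at *
  linarith [h.1, h.2]

lemma eventually_add_smul (hv : IsTimelike v) (w : Fin n → ℝ) :
    ∀ᶠ δ in 𝓝 (0 : ℝ), IsTimelike (v + δ • w) := by
  have : Tendsto (fun δ : ℝ => v + δ • w) (𝓝 0) (𝓝 v) :=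
    Continuous.tendsto' (by fun_prop) 0 v (by simp)
  exact this (isOpen_setOf_isTimelike.mem_nhds hv)

lemma eventually_smul_add (hv : IsTimelike v) (x : Fin n → ℝ) :
    ∀ᶠ t : ℝ in atTop, IsTimelike (t • v + x) := by
  filter_upwards [tendsto_inv_atTop_zero.eventually (hv.eventually_add_smul x),
    eventually_gt_atTop 0] with t ht htpos
  convert ht.smul htpos.ne' using 1
  rw [smul_add, smul_smul, mul_inv_cancel₀ htpos.ne', one_smul]

end IsTimelike

lemma exists_isTimelike (hn : n ≠ 0) : ∃ v : Fin n → ℝ, IsTimelike v := by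
  obtain ⟨k, rfl⟩ := Nat.exists_eq_succ_of_ne_zero hn
  exact ⟨Pi.single 0 1, by simp [IsTimelike, minkG, Fin.sum_univ_succ]⟩

lemma exists_isTimelike_notMem_span (hn : 2 ≤ n) (q : Fin n → ℝ) :
    ∃ e, IsTimelike e ∧ e ∉ ℝ ∙ q := by
  by_contra! h
  obtain ⟨v, hv⟩ := exists_isTimelike (n := n) (by omega)
  have htop : ℝ ∙ q = ⊤ := eq_top_of_nonempty_interior' _
    ⟨v, interior_mono h (isOpen_setOf_isTimelike.interior_eq.symm ▸ hv)⟩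
  have := finrank_span_le_card (R := ℝ) ({q} : Set (Fin n → ℝ))
  rw [htop, finrank_top, finrank_fin_fun] at this
  simp only [toFinset_singleton, Finset.card_singleton] at this
  omega

lemma exists_isTimelike_add_isTimelike (hn : 2 ≤ n) (p q : Fin n → ℝ) :
    ∃ u₁ u₂, IsTimelike u₁ ∧ IsTimelike u₂ ∧ u₁ ∉ ℝ ∙ q ∧ u₂ ∉ ℝ ∙ q ∧ u₁ + u₂ = p := by
  obtain ⟨e, he, heq⟩ := exists_isTimelike_notMem_span hn q
  have hbad : {t : ℝ | p - t • e ∈ ℝ ∙ q}.Subsingleton := by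
    intro t ht t' ht'
    by_contra hne
    refine heq ?_
    have : (t' - t)⁻¹ • ((p - t • e) - (p - t' • e)) = e := by
      rw [show p - t • e - (p - t' • e) = (t' - t) • e by module, smul_smul,
        inv_mul_cancel₀ (sub_ne_zero.2 (Ne.symm hne)), one_smul]
    exact this ▸ smul_mem _ _ (sub_mem ht ht')
  have hgood : ∀ᶠ t : ℝ in atTop, p - t • e ∉ ℝ ∙ q :=
    atTop_le_cofinite <| mem_cofinite.2 <| by
      simpa only [compl_ofPred, not_not] using hbad.finite
  obtain ⟨t, ht₀, ht, hpt⟩ :=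
    ((eventually_ne_atTop 0).and ((he.neg.eventually_smul_add p).and hgood)).exists
  refine ⟨t • e, p - t • e, he.smul ht₀, by simpa [sub_eq_neg_add] using ht, fun h => heq ?_,
    hpt, add_sub_cancel _ _⟩
  simpa [smul_smul, inv_mul_cancel₀ ht₀] using smul_mem _ t⁻¹ h

lemma exists_chord_of_slope {v w : Fin n → ℝ} {ε δ α β : ℝ} (hd : IsTimelike (v + δ • w))
    (hε : ε ≠ 0) (hδ : δ ≠ 0) (hδε : δ ≠ ε) (hβ : β ≠ α * δ) :
    ∃ γ t lam : ℝ, IsTimelike (t • (v + ε • w) - γ • v) ∧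
      α • v + β • w = γ • v + lam • (t • (v + ε • w) - γ • v) := by
  -- the line through `α • v + β • w` with direction `v + δ • w` meets `ℝ ∙ v` at `γ • v` and
  -- `ℝ ∙ (v + ε • w)` at `t • (v + ε • w)`, and these points differ as long as `β ≠ α * δ`
  have hεδ : ε - δ ≠ 0 := sub_ne_zero.2 hδε.symm
  have hβαδ : β - α * δ ≠ 0 := sub_ne_zero.2 hβ
  have hk : (β - α * δ) * ε / ((ε - δ) * δ) ≠ 0 := by positivity
  have hchord : ((β - α * δ) / (ε - δ)) • (v + ε • w) - (α - β / δ) • v =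
      ((β - α * δ) * ε / ((ε - δ) * δ)) • (v + δ • w) := by
    match_scalars <;> field_simp
    ring
  refine ⟨α - β / δ, (β - α * δ) / (ε - δ), β * (ε - δ) / ((β - α * δ) * ε),
    hchord ▸ hd.smul hk, ?_⟩
  rw [hchord]
  have hβδα : β - δ * α ≠ 0 := by rwa [mul_comm δ]
  match_scalars <;> field_simp
  ring

lemma IsTimelike.exists_chord {v : Fin n → ℝ} (hv : IsTimelike v) (w : Fin n → ℝ) :
    ∃ u, IsTimelike u ∧ ∀ α β : ℝ, ∃ γ t lam : ℝ, IsTimelike (t • u - γ • v) ∧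
      α • v + β • w = γ • v + lam • (t • u - γ • v) := by
  obtain ⟨ε, hε, hball⟩ := Metric.eventually_nhds_iff.1 (hv.eventually_add_smul w)
  have hslope (δ : ℝ) (hδ : |δ| < ε) : IsTimelike (v + δ • w) := hball (by simpa using hδ)
  have hu : IsTimelike (v + (ε / 2) • w) :=
    hslope _ (by rw [abs_of_pos (by positivity)]; linarith)
  refine ⟨_, hu, fun α β => ?_⟩
  by_cases h0 : α = 0 ∧ β = 0
  · exact ⟨0, 1, 0, by simpa using hu, by simp [h0.1, h0.2]⟩
  have hε4 : |ε / 4| < ε := by rw [abs_of_pos (by positivity)]; linarith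
  by_cases hβ : β = α * (ε / 4)
  · refine exists_chord_of_slope (hslope (-(ε / 4)) (by rwa [abs_neg])) (by positivity)
      (by simp [hε.ne']) (by linarith) fun h => h0 ?_
    have hα : α = 0 := (mul_eq_zero.1 (by linarith : α * ε = 0)).resolve_right hε.ne'
    simp [hα, hβ]
  · exact exists_chord_of_slope (hslope _ hε4) (by positivity) (by positivity) (by linarith) hβ

def MapsTimelikeLines (F : (Fin n → ℝ) → Fin n → ℝ) : Prop :=
  ∀ r v, IsTimelike v → ∃ r' v', IsTimelike v' ∧ F '' line r v = line r' v'

namespace MapsTimelikeLines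

variable {F : (Fin n → ℝ) → Fin n → ℝ} (hF : MapsTimelikeLines F) (hinj : Injective F)
include hF hinj

lemma image_line_eq_and_isTimelike {u : Fin n → ℝ} (hu : IsTimelike u) (a : Fin n → ℝ) :
    F '' line a u = line (F a) (F (a + u) - F a) ∧ IsTimelike (F (a + u) - F a) := by
  obtain ⟨r, v, hv, himg⟩ := hF a u hu
  obtain ⟨s, hs⟩ : F a ∈ line r v := himg ▸ mem_image_of_mem F ⟨0, by simp⟩
  obtain ⟨t, ht⟩ : F (a + u) ∈ line r v := himg ▸ mem_image_of_mem F ⟨1, by simp⟩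
  have hdiff : F (a + u) - F a = (t - s) • v := by rw [hs, ht]; module
  have hts : t - s ≠ 0 := by
    intro h
    rw [h, zero_smul, sub_eq_zero] at hdiff
    simpa [hu.ne_zero] using hinj hdiff
  exact ⟨by rw [himg, hdiff, hs, line_add_smul_smul _ _ _ hts], hdiff ▸ hv.smul hts⟩

lemma image_line {u : Fin n → ℝ} (hu : IsTimelike u) (a : Fin n → ℝ) :
    F '' line a u = line (F a) (F (a + u) - F a) :=
  (hF.image_line_eq_and_isTimelike hinj hu a).1

lemma isTimelike_map_add_sub {u : Fin n → ℝ} (hu : IsTimelike u) (a : Fin n → ℝ) :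
    IsTimelike (F (a + u) - F a) :=
  (hF.image_line_eq_and_isTimelike hinj hu a).2

lemma linearIndependent_map_add_sub {u w : Fin n → ℝ} (hu : IsTimelike u)
    (huw : LinearIndependent ℝ ![u, w]) (a : Fin n → ℝ) :
    LinearIndependent ℝ ![F (a + u) - F a, F (a + w) - F a] := by
  rw [LinearIndependent.pair_iff' (hF.isTimelike_map_add_sub hinj hu a).ne_zero]
  intro c hc
  have hmem : F (a + w) ∈ F '' line a u := by
    rw [hF.image_line hinj hu]
    exact ⟨c, by rw [hc]; abel⟩
  obtain ⟨s, hs⟩ := hinj.mem_set_image.1 hmem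
  exact (LinearIndependent.pair_iff' hu.ne_zero).1 huw s (add_left_cancel hs).symm

lemma map_add_smul_sub_mem {W : Submodule ℝ (Fin n → ℝ)} {p a d : Fin n → ℝ}
    (hd : IsTimelike d) (ha : F a - F p ∈ W) (had : F (a + d) - F p ∈ W) (lam : ℝ) :
    F (a + lam • d) - F p ∈ W := by
  obtain ⟨μ, hμ⟩ : F (a + lam • d) ∈ line (F a) (F (a + d) - F a) :=
    hF.image_line hinj hd a ▸ mem_image_of_mem F ⟨lam, rfl⟩
  rw [hμ, show F a + μ • (F (a + d) - F a) - F p =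
    (F a - F p) + μ • ((F (a + d) - F p) - (F a - F p)) by module]
  exact add_mem ha (smul_mem _ _ (sub_mem had ha))

lemma exists_finrank_le_two_map_sub_mem {v : Fin n → ℝ} (hv : IsTimelike v)
    (p w : Fin n → ℝ) :
    ∃ W : Submodule ℝ (Fin n → ℝ), finrank ℝ W ≤ 2 ∧
      ∀ α β : ℝ, F (p + α • v + β • w) - F p ∈ W := by
  obtain ⟨u, hu, hchord⟩ := hv.exists_chord w
  set W := span ℝ (range ![F (p + v) - F p, F (p + u) - F p])
  have hp : F p - F p ∈ W := by rw [sub_self]; exact zero_mem W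
  have hl₁ (γ : ℝ) : F (p + γ • v) - F p ∈ W :=
    hF.map_add_smul_sub_mem hinj hv hp (subset_span ⟨0, rfl⟩) γ
  have hl₂ (t : ℝ) : F (p + t • u) - F p ∈ W :=
    hF.map_add_smul_sub_mem hinj hu hp (subset_span ⟨1, rfl⟩) t
  refine ⟨W, (finrank_range_le_card _).trans_eq (Fintype.card_fin 2), fun α β => ?_⟩
  obtain ⟨γ, t, lam, hd, hx⟩ := hchord α β
  rw [add_assoc, hx, ← add_assoc]
  exact hF.map_add_smul_sub_mem hinj hd (hl₁ γ) (by rw [add_add_sub_cancel]; exact hl₂ t) lam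

lemma map_add_add_sub_mem_span {u w : Fin n → ℝ} (hu : IsTimelike u)
    (huw : LinearIndependent ℝ ![u, w]) (a : Fin n → ℝ) :
    F (a + w + u) - F (a + w) ∈ ℝ ∙ (F (a + u) - F a) := by
  by_contra h
  obtain ⟨W, hW, hmem⟩ := hF.exists_finrank_le_two_map_sub_mem hinj hu a w
  have hX : F (a + u) - F a ∈ W := by simpa using hmem 1 0
  have hZ : F (a + w) - F a ∈ W := by simpa using hmem 0 1
  have hY : F (a + w + u) - F (a + w) ∈ W := by
    rw [← sub_sub_sub_cancel_right _ _ (F a)]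
    exact sub_mem (by simpa [add_right_comm] using hmem 1 1) hZ
  have hXY := (LinearIndependent.pair_iff' (hF.isTimelike_map_add_sub hinj hu a).ne_zero).2
    fun c hc => h (mem_span_singleton.2 ⟨c, hc⟩)
  obtain ⟨c, d, hcd⟩ := mem_span_pair.1 (mem_span_pair_of_finrank_le_two hW hX hY hZ hXY)
  -- the images of the disjoint lines `line a u` and `line (a + w) u` would meet
  have hdisj := congrArg (F '' ·) (line_inter_line_add_eq_empty huw a)
  simp only [image_inter hinj, image_empty, hF.image_line hinj hu] at hdisj
  refine hdisj.subset ⟨⟨c, rfl⟩, ⟨-d, ?_⟩⟩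
  linear_combination (norm := module) hcd

lemma map_add_add {u w : Fin n → ℝ} (hu : IsTimelike u) (hw : IsTimelike w)
    (huw : LinearIndependent ℝ ![u, w]) (a : Fin n → ℝ) :
    F (a + u + w) = F (a + u) + F (a + w) - F a := by
  obtain ⟨k₁, hk₁⟩ := mem_span_singleton.1 (hF.map_add_add_sub_mem_span hinj hu huw a)
  obtain ⟨k₂, hk₂⟩ := mem_span_singleton.1
    (hF.map_add_add_sub_mem_span hinj hw (LinearIndependent.pair_symm_iff.1 huw) a)
  rw [add_right_comm] at hk₁
  have hk := LinearIndependent.pair_iff.1 (hF.linearIndependent_map_add_sub hinj hu huw a)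
    (k₁ - 1) (1 - k₂) (by linear_combination (norm := module) hk₁ - hk₂)
  rw [sub_eq_zero.1 hk.1, one_smul] at hk₁
  linear_combination (norm := module) -hk₁

lemma map_add_of_isTimelike (hn : 2 ≤ n) (p : Fin n → ℝ) {q : Fin n → ℝ} (hq : IsTimelike q) :
    F (p + q) = F p + F q - F 0 := by
  obtain ⟨u₁, u₂, hu₁, hu₂, hu₁q, hu₂q, rfl⟩ := exists_isTimelike_add_isTimelike hn p q
  have hind {u} (hu : u ∉ ℝ ∙ q) : LinearIndependent ℝ ![u, q] :=
    LinearIndependent.pair_symm_iff.1 (linearIndependent_pair_of_notMem_span hq.ne_zero hu)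
  have h₁ := hF.map_add_add hinj hu₁ hq (hind hu₁q) 0
  have h₂ := hF.map_add_add hinj hu₂ hq (hind hu₂q) u₁
  simp only [zero_add] at h₁
  rw [h₂, h₁]
  abel

lemma map_add (hn : 2 ≤ n) (p q : Fin n → ℝ) : F (p + q) = F p + F q - F 0 := by
  obtain ⟨u₁, u₂, hu₁, hu₂, -, -, rfl⟩ := exists_isTimelike_add_isTimelike hn q 0
  rw [← add_assoc, hF.map_add_of_isTimelike hinj hn _ hu₂,
    hF.map_add_of_isTimelike hinj hn _ hu₁, hF.map_add_of_isTimelike hinj hn _ hu₂]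
  abel

lemma exists_map_smul_sub_eq_smul {v : Fin n → ℝ} (hv : IsTimelike v) (t : ℝ) :
    ∃ c : ℝ, F (t • v) - F 0 = c • (F v - F 0) := by
  obtain ⟨c, hc⟩ : F (t • v) ∈ line (F 0) (F (0 + v) - F 0) :=
    hF.image_line hinj hv 0 ▸ mem_image_of_mem F ⟨t, by simp⟩
  exact ⟨c, by rw [hc, zero_add]; abel⟩

lemma linearIndependent_map_sub_map_zero {u w : Fin n → ℝ} (hu : IsTimelike u)
    (huw : LinearIndependent ℝ ![u, w]) :
    LinearIndependent ℝ ![F u - F 0, F w - F 0] := by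
  simpa using hF.linearIndependent_map_add_sub hinj hu huw 0

end MapsTimelikeLines

namespace AddMonoidHom

variable (G : (Fin n → ℝ) →+ (Fin n → ℝ))
  (hline : ∀ v, IsTimelike v → ∀ t : ℝ, ∃ c : ℝ, G (t • v) = c • G v)
  (hind : ∀ u w, IsTimelike u → LinearIndependent ℝ ![u, w] →
    LinearIndependent ℝ ![G u, G w])
include hline hind

lemma eq_of_map_smul_of_linearIndependent {u w : Fin n → ℝ} (hu : IsTimelike u)
    (hw : IsTimelike w) (huw : LinearIndependent ℝ ![u, w]) {t a b : ℝ}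
    (ha : G (t • u) = a • G u) (hb : G (t • w) = b • G w) : a = b := by
  wlog hsum : IsTimelike (u + w) generalizing w
  · refine this hw.neg (LinearIndependent.pair_neg_right_iff.2 huw) (by simp [hb])
      ((hu.add_or_sub hw).resolve_left hsum)
  obtain ⟨c, hc⟩ := hline _ hsum t
  rw [smul_add, map_add, map_add, ha, hb, smul_add] at hc
  have := LinearIndependent.pair_iff.1 (hind u w hu huw) (a - c) (b - c)
    (by linear_combination (norm := module) hc)
  linarith [this.1, this.2]

lemma eq_of_map_smul (hn : 2 ≤ n) {u w : Fin n → ℝ} (hu : IsTimelike u) (hw : IsTimelike w)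
    {t a b : ℝ} (ha : G (t • u) = a • G u) (hb : G (t • w) = b • G w) : a = b := by
  by_cases huw : LinearIndependent ℝ ![u, w]
  · exact G.eq_of_map_smul_of_linearIndependent hline hind hu hw huw ha hb
  obtain ⟨s, rfl⟩ : ∃ s : ℝ, s • u = w := by
    simpa [LinearIndependent.pair_iff' hu.ne_zero] using huw
  obtain ⟨f, hf, hfu⟩ := exists_isTimelike_notMem_span hn u
  obtain ⟨c, hc⟩ := hline f hf t
  have hfsu : f ∉ ℝ ∙ (s • u) := fun h => hfu (span_singleton_smul_le ℝ s u h)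
  calc a = c := G.eq_of_map_smul_of_linearIndependent hline hind hu hf
        (linearIndependent_pair_of_notMem_span hu.ne_zero hfu) ha hc
    _ = b := (G.eq_of_map_smul_of_linearIndependent hline hind hw hf
        (linearIndependent_pair_of_notMem_span hw.ne_zero hfsu) hb hc).symm

lemma map_smul_of_isTimelike (hn : 2 ≤ n) {v : Fin n → ℝ} (hv : IsTimelike v) (t : ℝ) :
    G (t • v) = t • G v := by
  choose φ hφ using hline v hv
  have hGv : G v ≠ 0 := by
    obtain ⟨f, -, hf⟩ := exists_isTimelike_notMem_span hn v
    exact (hind v f hv (linearIndependent_pair_of_notMem_span hv.ne_zero hf)).ne_zero 0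
  have hcancel {a b : ℝ} (h : a • G v = b • G v) : a = b := smul_left_injective ℝ hGv h
  have hzero : φ 0 = 0 := hcancel (by rw [← hφ, zero_smul, zero_smul, map_zero])
  have hmul (s r : ℝ) : φ (s * r) = φ s * φ r := by
    rcases eq_or_ne r 0 with rfl | hr
    · rw [mul_zero, hzero, mul_zero]
    obtain ⟨c, hc⟩ := hline _ (hv.smul hr) s
    have hcφ : c = φ s := G.eq_of_map_smul hline hind hn (hv.smul hr) hv hc (hφ s)
    refine hcancel ?_
    rw [← hφ, mul_smul, hc, hφ, hcφ, smul_smul]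
  let φ' : ℝ →+* ℝ :=
    { toFun := φ
      map_one' := hcancel (by rw [← hφ, one_smul, one_smul])
      map_mul' := hmul
      map_zero' := hzero
      map_add' := fun s r => hcancel (by rw [← hφ, add_smul, map_add, hφ, hφ, add_smul]) }
  rw [hφ, show φ t = t from DFunLike.congr_fun (Subsingleton.elim φ' (RingHom.id ℝ)) t]

lemma map_smul (hn : 2 ≤ n) (t : ℝ) (x : Fin n → ℝ) : G (t • x) = t • G x := by
  obtain ⟨u₁, u₂, hu₁, hu₂, -, -, rfl⟩ := exists_isTimelike_add_isTimelike hn x 0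
  rw [smul_add, map_add, map_add, G.map_smul_of_isTimelike hline hind hn hu₁,
    G.map_smul_of_isTimelike hline hind hn hu₂, smul_add]

end AddMonoidHom

/-- For `n ≥ 2`, a bijection of Minkowski space `ℝⁿ` mapping every
timelike (slow) line onto a timelike line is an affine map. -/
theorem timelike_line_preserving_affine (m : ℕ)
    (F : (Fin (m + 2) → ℝ) ≃ (Fin (m + 2) → ℝ))
    (hF : ∀ r v : Fin (m + 2) → ℝ, 0 < minkG v v →
      ∃ r' v' : Fin (m + 2) → ℝ, 0 < minkG v' v' ∧
        F '' {x | ∃ lam : ℝ, x = r + lam • v} = {x | ∃ lam : ℝ, x = r' + lam • v'}) :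
    ∃ (A : (Fin (m + 2) → ℝ) →ₗ[ℝ] (Fin (m + 2) → ℝ)) (a : Fin (m + 2) → ℝ),
      ∀ x, F x = A x + a := by
  have hF' : MapsTimelikeLines F := hF
  have hn : 2 ≤ m + 2 := Nat.le_add_left 2 m
  let G : (Fin (m + 2) → ℝ) →+ (Fin (m + 2) → ℝ) :=
    AddMonoidHom.mk' (fun x => F x - F 0) fun x y => by
      rw [hF'.map_add F.injective hn]
      abel
  have hsmul := G.map_smul (fun v hv t => hF'.exists_map_smul_sub_eq_smul F.injective hv t)
    (fun u w hu huw => hF'.linearIndependent_map_sub_map_zero F.injective hu huw) hn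
  exact ⟨{ G with map_smul' := hsmul }, F 0, fun x => (sub_add_cancel (F x) (F 0)).symm⟩
end

section
/- Let ℓ = {r + λ·v : λ ∈ ℝ} be a timelike line (g(v, v) > 0) in Minkowski space Mⁿ (n ≥ 2), and let p be a point not on ℓ. Let q₊ and q₋ be the two distinct intersection points of ℓ with the light-doublecone L_p, and let q = q₋ + t·(q₊ − q₋) with 0 < t < 1 be any point of ℓ strictly between them. Then ‖q − p‖_g² = ‖q₊ − q‖_g · ‖q − q₋‖_g, and moreover ‖q₊ − q‖_g = ‖q − q₋‖_g holds if and only if g(q − p, v) = 0, i.e. iff the line through p and q is g-orthogonal to ℓ. -/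
/-- The Minkowski "norm" `‖v‖_g = √|g(v,v)|`. -/
noncomputable def minkNorm {n : ℕ} (v : Fin n → ℝ) : ℝ :=
  Real.sqrt |minkG v v|

/-! With `x = q₋ - p` and `w = q₊ - q₋`, the two light-cone conditions `g(x,x) = 0 = g(x+w,x+w)`
force `2 g(x,w) = -g(w,w)`. Hence along the chord `g(x+tw, x+tw) = -t(1-t) g(w,w)` and
`2 g(x+tw, w) = (2t-1) g(w,w)`. Since `q₊ - q = (1-t)w` and `q - q₋ = tw`, the first identity is the
product formula, and the second shows that both sides of the equivalence say `t = 1/2`, because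
`g(w,w) ≠ 0` for a chord of a timelike line. -/

open LinearMap (BilinForm)

namespace LinearMap.BilinForm.IsSymm

variable {R M : Type*} [CommRing R] [AddCommGroup M] [Module R M] {B : BilinForm R M}

theorem apply_add_smul_self (hB : B.IsSymm) (x w : M) (s : R) :
    B (x + s • w) (x + s • w) = B x x + 2 * s * B x w + s ^ 2 * B w w := by
  simp only [map_add, map_smul, LinearMap.add_apply, LinearMap.smul_apply, smul_eq_mul,
    hB.eq w x]
  ring

variable {x w : M}

theorem two_mul_apply_eq_neg_of_isotropic (hB : B.IsSymm) (hx : B x x = 0)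
    (hxw : B (x + w) (x + w) = 0) : 2 * B x w = -B w w := by
  have := hB.apply_add_smul_self x w 1
  rw [one_smul, hxw, hx] at this
  linear_combination -this

theorem apply_add_smul_self_of_isotropic (hB : B.IsSymm) (hx : B x x = 0)
    (hxw : B (x + w) (x + w) = 0) (t : R) :
    B (x + t • w) (x + t • w) = -(t * (1 - t) * B w w) := by
  rw [hB.apply_add_smul_self, hx]
  linear_combination t * hB.two_mul_apply_eq_neg_of_isotropic hx hxw

theorem two_mul_apply_add_smul_of_isotropic (hB : B.IsSymm) (hx : B x x = 0)
    (hxw : B (x + w) (x + w) = 0) (t : R) :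
    2 * B (x + t • w) w = (2 * t - 1) * B w w := by
  simp only [map_add, map_smul, LinearMap.add_apply, LinearMap.smul_apply, smul_eq_mul]
  linear_combination hB.two_mul_apply_eq_neg_of_isotropic hx hxw

end LinearMap.BilinForm.IsSymm

noncomputable def minkowskiForm (n : ℕ) : BilinForm ℝ (Fin n → ℝ) :=
  Matrix.toBilin' (Matrix.diagonal fun i : Fin n => if (i : ℕ) = 0 then 1 else -1)

section Minkowski

variable {n : ℕ}

theorem minkowskiForm_apply (v w : Fin n → ℝ) : minkowskiForm n v w = minkG v w := by
  simp only [minkowskiForm, Matrix.toBilin'_apply', Matrix.mulVec_diagonal, dotProduct, minkG]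
  refine Finset.sum_congr rfl fun i _ => ?_
  split_ifs <;> ring

theorem minkowskiForm_isSymm (n : ℕ) : (minkowskiForm n).IsSymm :=
  ⟨fun v w => by simp only [minkowskiForm_apply, minkG, mul_comm (v _)]⟩

theorem minkG_smul_left (s : ℝ) (v w : Fin n → ℝ) : minkG (s • v) w = s * minkG v w := by
  simp only [← minkowskiForm_apply, map_smul, LinearMap.smul_apply, smul_eq_mul]

theorem minkG_smul_right (s : ℝ) (v w : Fin n → ℝ) : minkG v (s • w) = s * minkG v w := by
  simp only [← minkowskiForm_apply, map_smul, smul_eq_mul]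

theorem minkNorm_sq (v : Fin n → ℝ) : minkNorm v ^ 2 = |minkG v v| :=
  Real.sq_sqrt (abs_nonneg _)

theorem minkNorm_smul (s : ℝ) (v : Fin n → ℝ) : minkNorm (s • v) = |s| * minkNorm v := by
  rw [minkNorm, minkNorm, minkG_smul_left, minkG_smul_right, ← mul_assoc, abs_mul, abs_mul_self,
    Real.sqrt_mul (mul_self_nonneg s), Real.sqrt_mul_self_eq_abs]

theorem minkNorm_ne_zero {v : Fin n → ℝ} (hv : minkG v v ≠ 0) : minkNorm v ≠ 0 :=
  (Real.sqrt_pos.mpr (abs_pos.mpr hv)).ne'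

variable {x w : Fin n → ℝ}

theorem minkNorm_add_smul_sq_of_isotropic (hx : minkG x x = 0) (hxw : minkG (x + w) (x + w) = 0)
    (t : ℝ) : minkNorm (x + t • w) ^ 2 = minkNorm ((1 - t) • w) * minkNorm (t • w) := by
  rw [← minkowskiForm_apply] at hx hxw
  rw [minkNorm_sq, minkNorm_smul, minkNorm_smul, ← minkowskiForm_apply,
    (minkowskiForm_isSymm n).apply_add_smul_self_of_isotropic hx hxw, abs_neg, abs_mul, abs_mul,
    minkowskiForm_apply, ← minkNorm_sq]
  ring

theorem minkNorm_smul_eq_iff_of_isotropic (hx : minkG x x = 0)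
    (hxw : minkG (x + w) (x + w) = 0) (hw : minkG w w ≠ 0) (t : ℝ) :
    minkNorm ((1 - t) • w) = minkNorm (t • w) ↔ minkG (x + t • w) w = 0 := by
  rw [← minkowskiForm_apply] at hx hxw
  have hmid := (minkowskiForm_isSymm n).two_mul_apply_add_smul_of_isotropic hx hxw t
  rw [minkowskiForm_apply, minkowskiForm_apply] at hmid
  rw [minkNorm_smul, minkNorm_smul, mul_left_inj' (minkNorm_ne_zero hw), abs_eq_abs,
    or_iff_left (by linarith : 1 - t ≠ -t)]
  constructor
  · intro h
    linear_combination hmid / 2 - (minkG w w / 2) * h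
  · intro h
    have : (2 * t - 1) * minkG w w = 0 := by rw [← hmid, h, mul_zero]
    linarith [(mul_eq_zero.mp this).resolve_right hw]

end Minkowski

theorem einstein_simultaneity_general (m : ℕ)
    (r v p qp qm : Fin (m + 2) → ℝ) (t : ℝ)
    (hv : 0 < minkG v v)
    (hqp : ∃ lam : ℝ, qp = r + lam • v)
    (hqm : ∃ lam : ℝ, qm = r + lam • v)
    (hqpL : minkG (qp - p) (qp - p) = 0)
    (hqmL : minkG (qm - p) (qm - p) = 0)
    (hne : qp ≠ qm)
    (q : Fin (m + 2) → ℝ) (hq : q = qm + t • (qp - qm)) :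
    (minkNorm (q - p)) ^ 2 = minkNorm (qp - q) * minkNorm (q - qm) ∧
    (minkNorm (qp - q) = minkNorm (q - qm) ↔ minkG (q - p) v = 0) := by
  obtain ⟨c, hc⟩ : ∃ c : ℝ, qp - qm = c • v := by
    obtain ⟨a, rfl⟩ := hqp
    obtain ⟨b, rfl⟩ := hqm
    exact ⟨a - b, by module⟩
  have hc0 : c ≠ 0 := by
    rintro rfl
    exact hne (sub_eq_zero.mp (by rwa [zero_smul] at hc))
  have hchord : minkG (qp - qm) (qp - qm) ≠ 0 := by
    rw [hc, minkG_smul_left, minkG_smul_right]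
    positivity
  have hqpL' : minkG ((qm - p) + (qp - qm)) ((qm - p) + (qp - qm)) = 0 := by
    rwa [sub_add_sub_cancel']
  rw [show qp - q = (1 - t) • (qp - qm) by rw [hq]; module,
    show q - qm = t • (qp - qm) by rw [hq]; abel,
    show q - p = (qm - p) + t • (qp - qm) by rw [hq]; abel]
  refine ⟨minkNorm_add_smul_sq_of_isotropic hqmL hqpL' t, ?_⟩
  rw [minkNorm_smul_eq_iff_of_isotropic hqmL hqpL' hchord, hc, minkG_smul_right, mul_eq_zero,
    or_iff_right hc0]

/-- Let `ℓ = {r + λv}` be a timelike line, `p ∉ ℓ`, and let `q₊ ≠ q₋`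
be the two intersection points of `ℓ` with the light-doublecone at `p`. For any point
`q = q₋ + t(q₊ − q₋)`, `0 < t < 1`, strictly between them:
`‖q − p‖_g² = ‖q₊ − q‖_g · ‖q − q₋‖_g`, and `‖q₊ − q‖_g = ‖q − q₋‖_g` iff
`g(q − p, v) = 0`. -/
theorem einstein_simultaneity (m : ℕ)
    (r v p qp qm : Fin (m + 2) → ℝ) (t : ℝ)
    (hv : 0 < minkG v v)
    (hp : ¬ ∃ lam : ℝ, p = r + lam • v)
    (hqp : ∃ lam : ℝ, qp = r + lam • v)
    (hqm : ∃ lam : ℝ, qm = r + lam • v)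
    (hqpL : minkG (qp - p) (qp - p) = 0)
    (hqmL : minkG (qm - p) (qm - p) = 0)
    (hne : qp ≠ qm)
    (ht0 : 0 < t) (ht1 : t < 1)
    (q : Fin (m + 2) → ℝ) (hq : q = qm + t • (qp - qm)) :
    (minkNorm (q - p)) ^ 2 = minkNorm (qp - q) * minkNorm (q - qm) ∧
    (minkNorm (qp - q) = minkNorm (q - qm) ↔ minkG (q - p) v = 0) :=
  einstein_simultaneity_general m r v p qp qm t hv hqp hqm hqpL hqmL hne q hq
end
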